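/- arXiv:2605.15902 — 2 statements merged into one kernel-verified Lean document; each statement's English description precedes it below -/
import Mathlib

section
/- Let p(y|θ) = h(y) exp{θy − ψ(θ)} be a natural exponential family and π a prior density on θ. Define f(y) = ∫ p(y|θ) π(θ) dθ. If f(y) > 0, h(y) > 0, and differentiation under the integral is justified near y, then E[θ | Y = y] = d/dy log(f(y)/h(y)) = d/dy log f(y) − d/dy log h(y). -/
open MeasureTheory Real

/-!
Writing `p(u|θ) π(θ) = h(u) · exp(θu − ψ(θ)) π(θ)` factors the marginal as `f = h · g` with
`g(u) = ∫ exp(θu − ψ(θ)) π(θ) dθ`. Differentiating under the integral sign (dominated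
convergence, via the bound `H`) gives `g'(y) = ∫ θ exp(θy − ψ(θ)) π(θ) dθ`, so the posterior
mean is `h(y) g'(y) / (h(y) g(y)) = g'(y) / g(y)`, the logarithmic derivative of `g = f / h`,
which is also `(log f)' − (log h)'`.
-/

theorem ae_forall_mem_le_of_continuous {X α : Type*} [TopologicalSpace X]
    [TopologicalSpace.SeparableSpace X] [MeasurableSpace α] {μ : Measure α} {U : Set X}
    (hU : IsOpen U) {F : X → α → ℝ} {G : α → ℝ} (hF : ∀ a, Continuous fun x => F x a)
    (h : ∀ x ∈ U, ∀ᵐ a ∂μ, F x a ≤ G a) :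
    ∀ᵐ a ∂μ, ∀ x ∈ U, F x a ≤ G a := by
  obtain ⟨D, hD_count, hD_dense⟩ := TopologicalSpace.exists_countable_dense X
  have hUD : ∀ᵐ a ∂μ, ∀ x ∈ U ∩ D, F x a ≤ G a :=
    (ae_ball_iff (hD_count.mono Set.inter_subset_right)).mpr fun x hx => h x hx.1
  filter_upwards [hUD] with a ha x hx
  exact closure_minimal ha (isClosed_le (hF a) continuous_const)
    (hD_dense.open_subset_closure_inter hU hx)

theorem hasDerivAt_integral_exp_mul_sub {μ : Measure ℝ} {ψ w : ℝ → ℝ} {y : ℝ} {U : Set ℝ}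
    (hU : IsOpen U) (hyU : y ∈ U) {H : ℝ → ℝ} (hH : Integrable H μ)
    (hdom : ∀ u ∈ U, ∀ᵐ θ ∂μ, |θ * exp (θ * u - ψ θ) * w θ| ≤ H θ)
    (hint : Integrable (fun θ => exp (θ * y - ψ θ) * w θ) μ) :
    HasDerivAt (fun u => ∫ θ, exp (θ * u - ψ θ) * w θ ∂μ)
      (∫ θ, θ * exp (θ * y - ψ θ) * w θ ∂μ) y := by
  -- `w` need not be measurable: each tilt is a continuous multiple of the integrable one at `y`.
  have hmeas : ∀ u, AEStronglyMeasurable (fun θ => exp (θ * u - ψ θ) * w θ) μ := by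
    intro u
    have htilt : (fun θ => exp (θ * u - ψ θ) * w θ)
        = fun θ => exp (θ * (u - y)) * (exp (θ * y - ψ θ) * w θ) := by
      funext θ
      rw [← mul_assoc, ← exp_add]
      ring_nf
    rw [htilt]
    exact (by fun_prop : Continuous fun θ : ℝ => exp (θ * (u - y))).aestronglyMeasurable.mul
      hint.aestronglyMeasurable
  have hmeas_deriv : AEStronglyMeasurable (fun θ => θ * exp (θ * y - ψ θ) * w θ) μ := by
    simp_rw [mul_assoc]
    exact aestronglyMeasurable_id.mul hint.aestronglyMeasurable
  have hbound : ∀ᵐ θ ∂μ, ∀ u ∈ U, ‖θ * exp (θ * u - ψ θ) * w θ‖ ≤ H θ :=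
    ae_forall_mem_le_of_continuous hU (fun θ => by fun_prop) hdom
  refine (hasDerivAt_integral_of_dominated_loc_of_deriv_le (hU.mem_nhds hyU)
    (.of_forall hmeas) hint hmeas_deriv hbound hH ?_).2
  filter_upwards with θ u _
  exact ((((hasDerivAt_id' u).const_mul θ).sub_const (ψ θ)).exp.mul_const (w θ)).congr_deriv
    (by ring)

theorem deriv_log_apply_eq_logDeriv {F : ℝ → ℝ} {x : ℝ} (hF : DifferentiableAt ℝ F x)
    (hFx : F x ≠ 0) : deriv (fun u => log (F u)) x = logDeriv F x :=
  Real.deriv_log_comp_eq_logDeriv hF hFx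

theorem tweedie_nef_general
    (h : ℝ → ℝ) (ψ : ℝ → ℝ)
    (p : ℝ → ℝ → ℝ)
    (hp : ∀ y θ, p y θ = h y * Real.exp (θ * y - ψ θ))
    (pr : ℝ → ℝ)
    (y : ℝ)
    (f : ℝ → ℝ)
    (hf : ∀ u, f u = ∫ θ : ℝ, p u θ * pr θ)
    (hfy : 0 < f y) (hhy : 0 < h y)
    (hhdiff : DifferentiableAt ℝ h y)
    (U : Set ℝ) (hU : IsOpen U) (hyU : y ∈ U)
    (H : ℝ → ℝ) (hH : Integrable H)
    (hdom : ∀ u ∈ U, ∀ᵐ θ : ℝ,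
      |θ * Real.exp (θ * u - ψ θ) * pr θ| ≤ H θ) :
    (∫ θ : ℝ, θ * (p y θ * pr θ)) / f y
        = deriv (fun u => Real.log (f u / h u)) y
      ∧ (∫ θ : ℝ, θ * (p y θ * pr θ)) / f y
        = deriv (fun u => Real.log (f u)) y - deriv (fun u => Real.log (h u)) y := by
  set g : ℝ → ℝ := fun u => ∫ θ, exp (θ * u - ψ θ) * pr θ
  have hfg : f = fun u => h u * g u := by
    funext u
    simp only [hf, hp, g, ← integral_const_mul, mul_assoc]
  have hgy : 0 < g y := pos_of_mul_pos_right (by rwa [hfg] at hfy) hhy.le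
  have hg : HasDerivAt g (∫ θ, θ * exp (θ * y - ψ θ) * pr θ) y :=
    hasDerivAt_integral_exp_mul_sub hU hyU hH hdom (Integrable.of_integral_ne_zero hgy.ne')
  have hmean : (∫ θ, θ * (p y θ * pr θ)) / f y = logDeriv g y := by
    rw [logDeriv_apply, hg.deriv, hfg, ← mul_div_mul_left _ (g y) hhy.ne',
      ← integral_const_mul]
    simp only [hp]
    congr 2
    funext θ
    ring
  have hfdiff : DifferentiableAt ℝ f y := hfg ▸ hhdiff.mul hg.differentiableAt
  have hlogf : logDeriv f y = logDeriv h y + logDeriv g y := by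
    rw [hfg]
    exact logDeriv_mul y hhy.ne' hgy.ne' hhdiff hg.differentiableAt
  refine ⟨?_, ?_⟩
  · rw [hmean, deriv_log_apply_eq_logDeriv (F := fun u => f u / h u)
      (hfdiff.div hhdiff hhy.ne') (div_ne_zero hfy.ne' hhy.ne'),
      logDeriv_div y hfy.ne' hhy.ne' hfdiff hhdiff, hlogf]
    ring
  · rw [hmean, deriv_log_apply_eq_logDeriv hfdiff hfy.ne',
      deriv_log_apply_eq_logDeriv hhdiff hhy.ne', hlogf]
    ring

/-- Natural-exponential-family Tweedie identity: the posterior mean of the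
natural parameter is the marginal score corrected for the base measure. -/
theorem tweedie_nef
    (h : ℝ → ℝ) (ψ : ℝ → ℝ)
    (p : ℝ → ℝ → ℝ)
    (hp : ∀ y θ, p y θ = h y * Real.exp (θ * y - ψ θ))
    (pr : ℝ → ℝ) (hpr_nonneg : ∀ θ, 0 ≤ pr θ)
    (hpr_int : ∫ θ : ℝ, pr θ = 1)
    (y : ℝ)
    (f : ℝ → ℝ)
    (hf : ∀ u, f u = ∫ θ : ℝ, p u θ * pr θ)
    (hfy : 0 < f y) (hhy : 0 < h y)
    (hfdiff : DifferentiableAt ℝ f y)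
    (hhdiff : DifferentiableAt ℝ h y)
    (U : Set ℝ) (hU : IsOpen U) (hyU : y ∈ U)
    (H : ℝ → ℝ) (hH : Integrable H)
    (hdom : ∀ u ∈ U, ∀ᵐ θ : ℝ,
      |θ * Real.exp (θ * u - ψ θ) * pr θ| ≤ H θ) :
    (∫ θ : ℝ, θ * (p y θ * pr θ)) / f y
        = deriv (fun u => Real.log (f u / h u)) y
      ∧ (∫ θ : ℝ, θ * (p y θ * pr θ)) / f y
        = deriv (fun u => Real.log (f u)) y - deriv (fun u => Real.log (h u)) y :=
  tweedie_nef_general h ψ p hp pr y f hf hfy hhy hhdiff U hU hyU H hH hdom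
end

section
/- For a natural exponential family p(y|θ) = h(y)exp{θy − ψ(θ)}, if the prior is conjugate, π(θ) ∝ exp{τθ − nψ(θ)} with n > 0, and the posterior-kernel boundary terms vanish, then the posterior mean of μ = ψ′(θ) is E[μ | Y = y] = (τ + y)/(n + 1). -/
open MeasureTheory Real Filter

/-!
The derivative of the posterior kernel `k(θ) = exp{θ(y + τ) − (n + 1)ψ(θ)}` is
`(y + τ − (n + 1)ψ'(θ)) k(θ)`. Since `k` vanishes at both ends of the line, this derivative
integrates to zero, i.e. `(n + 1) ∫ ψ' k = (y + τ) ∫ k`, which is the claim after dividing by `∫ k`.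
-/

section ExpKernel

variable {ψ : ℝ → ℝ} {a b : ℝ}

theorem hasDerivAt_exp_mul_sub_mul (hψ : Differentiable ℝ ψ) (θ : ℝ) :
    HasDerivAt (fun t => exp (t * a - b * ψ t))
      ((a - b * deriv ψ θ) * exp (θ * a - b * ψ θ)) θ := by
  have hexponent : HasDerivAt (fun t => t * a - b * ψ t) (a - b * deriv ψ θ) θ := by
    simpa [Pi.sub_def] using ((hasDerivAt_id θ).mul_const a).sub ((hψ θ).hasDerivAt.const_mul b)
  simpa [mul_comm] using hexponent.exp

theorem mul_integral_deriv_mul_exp_eq (hψ : Differentiable ℝ ψ)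
    (hint : Integrable fun t => exp (t * a - b * ψ t))
    (hint_deriv : Integrable fun t => deriv ψ t * exp (t * a - b * ψ t))
    (hbot : Tendsto (fun t => exp (t * a - b * ψ t)) atBot (nhds 0))
    (htop : Tendsto (fun t => exp (t * a - b * ψ t)) atTop (nhds 0)) :
    b * ∫ t, deriv ψ t * exp (t * a - b * ψ t) = a * ∫ t, exp (t * a - b * ψ t) := by
  have hsplit : (fun t => (a - b * deriv ψ t) * exp (t * a - b * ψ t)) =
      fun t => a * exp (t * a - b * ψ t) - b * (deriv ψ t * exp (t * a - b * ψ t)) := by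
    funext t; ring
  have hzero := integral_of_hasDerivAt_of_tendsto (hasDerivAt_exp_mul_sub_mul hψ)
    (hsplit ▸ (hint.const_mul a).sub (hint_deriv.const_mul b)) hbot htop
  rw [hsplit, integral_sub (hint.const_mul a) (hint_deriv.const_mul b),
    integral_const_mul, integral_const_mul, sub_zero] at hzero
  linarith

end ExpKernel

theorem nef_conjugate_posterior_mean_general
    (ψ : ℝ → ℝ) (hψ : Differentiable ℝ ψ)
    (τ n : ℝ) (hn : 0 < n)
    (y : ℝ)
    -- the posterior kernel `exp{θ(y+τ) − (n+1)ψ(θ)}`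
    (k : ℝ → ℝ) (hk : ∀ θ, k θ = Real.exp (θ * (y + τ) - (n + 1) * ψ θ))
    (Z : ℝ) (hZ : Z = ∫ θ : ℝ, k θ) (hZpos : 0 < Z)
    (hk_int : Integrable k)
    (hμk_int : Integrable (fun θ => deriv ψ θ * k θ))
    -- boundary terms vanish at the endpoints of the natural parameter space
    (hbot : Tendsto k atBot (nhds 0)) (htop : Tendsto k atTop (nhds 0)) :
    (∫ θ : ℝ, deriv ψ θ * k θ) / Z = (τ + y) / (n + 1) := by
  obtain rfl : k = fun θ => exp (θ * (y + τ) - (n + 1) * ψ θ) := funext hk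
  have hkey := mul_integral_deriv_mul_exp_eq hψ hk_int hμk_int hbot htop
  rw [← hZ] at hkey
  rw [div_eq_div_iff hZpos.ne' (by linarith)]
  linarith

/-- Conjugate-prior special case of the expectation-parameter identity:
with `π(θ) ∝ exp{τθ − nψ(θ)}`, `n > 0`, and vanishing posterior-kernel
boundary terms, `E[μ | Y = y] = (τ + y)/(n + 1)` where `μ = ψ'(θ)`. -/
theorem nef_conjugate_posterior_mean
    (ψ : ℝ → ℝ) (hψ : Differentiable ℝ ψ)
    (τ n : ℝ) (hn : 0 < n)
    (c : ℝ) (hc : 0 < c)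
    (pr : ℝ → ℝ) (hpr : ∀ θ, pr θ = c * Real.exp (τ * θ - n * ψ θ))
    (hpr_int : ∫ θ : ℝ, pr θ = 1)
    (y : ℝ)
    -- the posterior kernel `exp{θ(y+τ) − (n+1)ψ(θ)}`
    (k : ℝ → ℝ) (hk : ∀ θ, k θ = Real.exp (θ * (y + τ) - (n + 1) * ψ θ))
    (Z : ℝ) (hZ : Z = ∫ θ : ℝ, k θ) (hZpos : 0 < Z)
    (hk_int : Integrable k)
    (hμk_int : Integrable (fun θ => deriv ψ θ * k θ))
    -- boundary terms vanish at the endpoints of the natural parameter space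
    (hbot : Tendsto k atBot (nhds 0)) (htop : Tendsto k atTop (nhds 0)) :
    (∫ θ : ℝ, deriv ψ θ * k θ) / Z = (τ + y) / (n + 1) :=
  nef_conjugate_posterior_mean_general ψ hψ τ n hn y k hk Z hZ hZpos hk_int hμk_int hbot htop
end
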